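/- arXiv:2002.01692 — 7 statements merged into one kernel-verified Lean document; each statement's English description precedes it below -/
import Mathlib

section
/- Let n ≥ 1, let λ₁ ≥ λ₂ ≥ ⋯ ≥ λₙ ≥ 0 be real weights, and let e ∈ ℝⁿ with eᵢ ≥ 0 for all i. Then OM_λ(e) = Σᵢ λᵢ e₍ᵢ₎ equals the optimal value of the linear program min { Σ_{k=1}^n u_k + Σ_{i=1}^n v_i : u, v ∈ ℝⁿ, u_k + v_i ≥ λ_k eᵢ for all i, k }; that is, every pair (u, v) ∈ ℝⁿ × ℝⁿ satisfying u_k + v_i ≥ λ_k eᵢ for all i, k has Σ_k u_k + Σ_i v_i ≥ OM_λ(e), and there exists such a feasible pair attaining equality. -/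
/-!
Linear programming duality for the assignment problem, made explicit. Pairing each `k` with the
`k`-th largest entry of `e` shows that every feasible `(u, v)` has value at least `OM_λ(e)`.
Conversely, if `d = e ∘ σ` is the decreasing rearrangement of `e` and `V` is a potential with
`λ_k (d_j - d_k) ≤ V_j - V_k` for all `j, k`, then `u_k = λ_k d_k - V_k`, `v_{σ j} = V_j` is
feasible with value `∑ λ_k d_k`. Such a `V` is obtained by summing the increments
`λ_{m+1} (d_{m+1} - d_m)`; the inequality then holds termwise because `λ` and `d` are both
antitone.
-/

open Finset

/-- The ordered median function: `OM lam e = ∑ i, lam i * e_(i)`, where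
`e_(1) ≥ ⋯ ≥ e_(n)` is the decreasing rearrangement of `e`. -/
noncomputable def OM {n : ℕ} (lam e : Fin n → ℝ) : ℝ :=
  ∑ i : Fin n, lam i * e (Tuple.sort e i.rev)

def potential (lam d : ℕ → ℝ) (j : ℕ) : ℝ :=
  ∑ m ∈ range j, lam (m + 1) * (d (m + 1) - d m)

theorem potential_sub_potential (lam d : ℕ → ℝ) {j k : ℕ} (hjk : j ≤ k) :
    potential lam d k - potential lam d j = ∑ m ∈ Ico j k, lam (m + 1) * (d (m + 1) - d m) :=
  (sum_Ico_eq_sub _ hjk).symm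

theorem mul_sub_le_potential_sub {lam d : ℕ → ℝ} (hlam : Antitone lam) (hd : Antitone d)
    (j k : ℕ) : lam k * (d j - d k) ≤ potential lam d j - potential lam d k := by
  have hstep : ∀ m, d (m + 1) - d m ≤ 0 := fun m => sub_nonpos.2 (hd m.le_succ)
  rcases le_total j k with hjk | hkj
  · calc lam k * (d j - d k) = -∑ m ∈ Ico j k, lam k * (d (m + 1) - d m) := by
          rw [← mul_sum, sum_Ico_sub _ hjk]; ring
      _ ≤ -∑ m ∈ Ico j k, lam (m + 1) * (d (m + 1) - d m) := by
          refine neg_le_neg (sum_le_sum fun m hm => mul_le_mul_of_nonpos_right ?_ (hstep m))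
          exact hlam (mem_Ico.1 hm).2
      _ = potential lam d j - potential lam d k := by
          rw [← potential_sub_potential lam d hjk]; ring
  · calc lam k * (d j - d k) = ∑ m ∈ Ico k j, lam k * (d (m + 1) - d m) := by
          rw [← mul_sum, sum_Ico_sub _ hkj]
      _ ≤ ∑ m ∈ Ico k j, lam (m + 1) * (d (m + 1) - d m) := by
          refine sum_le_sum fun m hm => mul_le_mul_of_nonpos_right ?_ (hstep m)
          exact hlam (Nat.le_succ_of_le (mem_Ico.1 hm).1)
      _ = potential lam d j - potential lam d k := (potential_sub_potential lam d hkj).symm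

theorem exists_potential_of_antitone {n : ℕ} {lam d : Fin n → ℝ} (hlam : Antitone lam)
    (hd : Antitone d) : ∃ V : Fin n → ℝ, ∀ j k, lam k * (d j - d k) ≤ V j - V k := by
  obtain _ | N := n
  · exact ⟨0, fun j => j.elim0⟩
  let extend (f : Fin (N + 1) → ℝ) (m : ℕ) : ℝ := f ⟨min m N, by omega⟩
  have extend_antitone {f : Fin (N + 1) → ℝ} (hf : Antitone f) : Antitone (extend f) :=
    fun a b hab => hf (Fin.mk_le_mk.2 (min_le_min_right N hab))
  have extend_val (f : Fin (N + 1) → ℝ) (j : Fin (N + 1)) : extend f j = f j := by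
    simp only [extend, min_eq_left (Nat.le_of_lt_succ j.isLt)]
  refine ⟨fun j => potential (extend lam) (extend d) j, fun j k => ?_⟩
  simpa only [extend_val] using
    mul_sub_le_potential_sub (extend_antitone hlam) (extend_antitone hd) j k

section Assignment

variable {ι κ : Type*} [Fintype ι] [Fintype κ]

def assignmentDualValues (lam : κ → ℝ) (e : ι → ℝ) : Set ℝ :=
  {x | ∃ (u : κ → ℝ) (v : ι → ℝ), (∀ i k, lam k * e i ≤ u k + v i) ∧ x = ∑ k, u k + ∑ i, v i}

theorem sum_mul_comp_le_of_mem_assignmentDualValues {lam : κ → ℝ} {e : ι → ℝ} {x : ℝ}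
    (hx : x ∈ assignmentDualValues lam e) (τ : κ ≃ ι) : ∑ k, lam k * e (τ k) ≤ x := by
  obtain ⟨u, v, hfeas, rfl⟩ := hx
  rw [← Equiv.sum_comp τ v, ← sum_add_distrib]
  exact sum_le_sum fun k _ => hfeas (τ k) k

theorem sum_mul_comp_mem_assignmentDualValues {n : ℕ} {lam : Fin n → ℝ} {e : ι → ℝ}
    (hlam : Antitone lam) (τ : Fin n ≃ ι) (he : Antitone (e ∘ τ)) :
    ∑ k, lam k * e (τ k) ∈ assignmentDualValues lam e := by
  obtain ⟨V, hV⟩ := exists_potential_of_antitone hlam he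
  refine ⟨fun k => lam k * e (τ k) - V k, fun i => V (τ.symm i), fun i k => ?_, ?_⟩
  · have := hV (τ.symm i) k
    simp only [Function.comp_apply, Equiv.apply_symm_apply] at this
    linarith
  · rw [Equiv.sum_comp τ.symm V, sum_sub_distrib, sub_add_cancel]

end Assignment

theorem stmt3_general {n : ℕ} (lam e : Fin n → ℝ)
    (hmono : Antitone lam) :
    IsLeast {x : ℝ | ∃ u v : Fin n → ℝ,
        (∀ i k : Fin n, lam k * e i ≤ u k + v i) ∧
        x = (∑ k : Fin n, u k) + ∑ i : Fin n, v i}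
      (OM lam e) := by
  let τ : Fin n ≃ Fin n := Fin.revPerm.trans (Tuple.sort e)
  have hsorted : Antitone (e ∘ τ) := fun a b hab => Tuple.monotone_sort e (Fin.rev_le_rev.2 hab)
  exact ⟨sum_mul_comp_mem_assignmentDualValues hmono τ hsorted,
    fun x hx => sum_mul_comp_le_of_mem_assignmentDualValues hx τ⟩

/-- `OM_λ(e)` equals the optimal value of the LP
`min { ∑ₖ uₖ + ∑ᵢ vᵢ : uₖ + vᵢ ≥ λₖ eᵢ ∀ i,k }`: every feasible pair `(u,v)` has
objective value at least `OM_λ(e)`, and some feasible pair attains it. -/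
theorem stmt3 {n : ℕ} (hn : 1 ≤ n) (lam e : Fin n → ℝ)
    (hmono : Antitone lam) (hpos : ∀ i, 0 ≤ lam i) (he : ∀ i, 0 ≤ e i) :
    IsLeast {x : ℝ | ∃ u v : Fin n → ℝ,
        (∀ i k : Fin n, lam k * e i ≤ u k + v i) ∧
        x = (∑ k : Fin n, u k) + ∑ i : Fin n, v i}
      (OM lam e) :=
  stmt3_general lam e hmono
end

section
/- Let d ≥ 1, let β¹, β² ∈ ℝ^d with ‖β¹‖_∞ = ‖β²‖_∞ = 1, let α¹, α² ∈ ℝ, let σ ∈ [0,1], and suppose there is an index ĵ with |β¹_ĵ| = |β²_ĵ| = 1. Let s = β¹_ĵ · β²_ĵ ∈ {−1, 1}, and define β* = σβ¹ + s(1−σ)β² and α* = σα¹ + s(1−σ)α². Then ‖β*‖_∞ = 1, and for every x ∈ ℝ^d, |α* + β*ᵀx| / ‖β*‖_∞ ≤ σ · |α¹ + β¹ᵀx| / ‖β¹‖_∞ + (1−σ) · |α² + β²ᵀx| / ‖β²‖_∞. -/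
/-- The `ℓ_∞` norm of `β ∈ ℝ^d` (for `d ≥ 1`): `‖β‖_∞ = max_ℓ |β_ℓ|`. -/
noncomputable def linfty {d : ℕ} (hd : 0 < d) (β : Fin d → ℝ) : ℝ :=
  Finset.univ.sup' (Finset.univ_nonempty_iff.mpr ⟨⟨0, hd⟩⟩) (fun ℓ => |β ℓ|)

/-- If `‖β¹‖_∞ = ‖β²‖_∞ = 1`, `σ ∈ [0,1]`, and `|β¹_ĵ| = |β²_ĵ| = 1` for some index `ĵ`,
then with `s = β¹_ĵ·β²_ĵ ∈ {−1,1}`, the combination `β* = σβ¹ + s(1−σ)β²`,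
`α* = σα¹ + s(1−σ)α²` satisfies `‖β*‖_∞ = 1` and, for every `x`, the `ℓ₁`-norm residual
of `x` w.r.t. `H(β*,α*)` is at most the convex combination of the residuals w.r.t.
`H(β¹,α¹)` and `H(β²,α²)`. -/
theorem stmt8 {d : ℕ} (hd : 0 < d) (β1 β2 : Fin d → ℝ) (α1 α2 : ℝ)
    (h1 : linfty hd β1 = 1) (h2 : linfty hd β2 = 1)
    (σ : ℝ) (hσ : σ ∈ Set.Icc (0 : ℝ) 1)
    (j0 : Fin d) (hj1 : |β1 j0| = 1) (hj2 : |β2 j0| = 1) :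
    (β1 j0 * β2 j0 = 1 ∨ β1 j0 * β2 j0 = -1) ∧
    linfty hd (fun ℓ => σ * β1 ℓ + (β1 j0 * β2 j0) * (1 - σ) * β2 ℓ) = 1 ∧
    ∀ x : Fin d → ℝ,
      |(σ * α1 + (β1 j0 * β2 j0) * (1 - σ) * α2) +
          ∑ ℓ : Fin d, (σ * β1 ℓ + (β1 j0 * β2 j0) * (1 - σ) * β2 ℓ) * x ℓ| /
        linfty hd (fun ℓ => σ * β1 ℓ + (β1 j0 * β2 j0) * (1 - σ) * β2 ℓ) ≤
      σ * (|α1 + ∑ ℓ : Fin d, β1 ℓ * x ℓ| / linfty hd β1) +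
        (1 - σ) * (|α2 + ∑ ℓ : Fin d, β2 ℓ * x ℓ| / linfty hd β2) := by
  obtain ⟨hσ0, hσ1⟩ := hσ
  set s := β1 j0 * β2 j0 with hs
  have hsabs : |s| = 1 := by rw [hs, abs_mul, hj1, hj2]; ring
  have hspm : s = 1 ∨ s = -1 := by
    rcases abs_eq (by norm_num : (0:ℝ) ≤ 1) |>.mp hsabs with h | h
    · exact Or.inl h
    · exact Or.inr h
  have hb2sq : β2 j0 * β2 j0 = 1 := by
    have := sq_abs (β2 j0); rw [hj2] at this; nlinarith
  have hle1 : ∀ ℓ, |β1 ℓ| ≤ 1 := fun ℓ => by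
    rw [← h1]; exact Finset.le_sup' (fun ℓ => |β1 ℓ|) (Finset.mem_univ ℓ)
  have hle2 : ∀ ℓ, |β2 ℓ| ≤ 1 := fun ℓ => by
    rw [← h2]; exact Finset.le_sup' (fun ℓ => |β2 ℓ|) (Finset.mem_univ ℓ)
  have hnorm : linfty hd (fun ℓ => σ * β1 ℓ + s * (1 - σ) * β2 ℓ) = 1 := by
    apply le_antisymm
    · apply Finset.sup'_le
      intro ℓ _
      calc |σ * β1 ℓ + s * (1 - σ) * β2 ℓ| ≤ |σ * β1 ℓ| + |s * (1 - σ) * β2 ℓ| := abs_add_le _ _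
        _ = σ * |β1 ℓ| + (1 - σ) * |β2 ℓ| := by
            rw [abs_mul, abs_mul, abs_mul, hsabs, abs_of_nonneg hσ0,
              abs_of_nonneg (by linarith : (0:ℝ) ≤ 1 - σ)]; ring
        _ ≤ σ * 1 + (1 - σ) * 1 := by
            have := hle1 ℓ; have := hle2 ℓ
            nlinarith [abs_nonneg (β1 ℓ), abs_nonneg (β2 ℓ)]
        _ = 1 := by ring
    · calc (1:ℝ) = |σ * β1 j0 + s * (1 - σ) * β2 j0| := by
            rw [hs]
            have : σ * β1 j0 + β1 j0 * β2 j0 * (1 - σ) * β2 j0 = β1 j0 := by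
              have : β1 j0 * β2 j0 * (1 - σ) * β2 j0 = β1 j0 * (1 - σ) * (β2 j0 * β2 j0) := by ring
              rw [this, hb2sq]; ring
            rw [this, hj1]
        _ ≤ _ := Finset.le_sup' (f := fun ℓ => |σ * β1 ℓ + s * (1 - σ) * β2 ℓ|)
              (Finset.mem_univ j0)
  refine ⟨hspm, hnorm, fun x => ?_⟩
  rw [hnorm, h1, h2, div_one, div_one, div_one]
  have hsum : ∑ ℓ : Fin d, (σ * β1 ℓ + s * (1 - σ) * β2 ℓ) * x ℓ
      = σ * ∑ ℓ : Fin d, β1 ℓ * x ℓ + s * (1 - σ) * ∑ ℓ : Fin d, β2 ℓ * x ℓ := by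
    rw [Finset.mul_sum, Finset.mul_sum, ← Finset.sum_add_distrib]
    exact Finset.sum_congr rfl fun ℓ _ => by ring
  rw [hsum]
  calc |σ * α1 + s * (1 - σ) * α2 + (σ * ∑ ℓ : Fin d, β1 ℓ * x ℓ + s * (1 - σ) * ∑ ℓ : Fin d, β2 ℓ * x ℓ)|
      = |σ * (α1 + ∑ ℓ : Fin d, β1 ℓ * x ℓ) + s * (1 - σ) * (α2 + ∑ ℓ : Fin d, β2 ℓ * x ℓ)| := by
        ring_nf
    _ ≤ |σ * (α1 + ∑ ℓ : Fin d, β1 ℓ * x ℓ)| + |s * (1 - σ) * (α2 + ∑ ℓ : Fin d, β2 ℓ * x ℓ)| :=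
        abs_add_le _ _
    _ = σ * |α1 + ∑ ℓ : Fin d, β1 ℓ * x ℓ| + (1 - σ) * |α2 + ∑ ℓ : Fin d, β2 ℓ * x ℓ| := by
        rw [abs_mul, abs_mul, abs_mul, hsabs, abs_of_nonneg hσ0,
          abs_of_nonneg (by linarith : (0:ℝ) ≤ 1 - σ)]; ring
end

section
/- Let x₁,…,xₙ ∈ ℝ^d, let λ₁ ≥ λ₂ ≥ ⋯ ≥ λₙ ≥ 0, let ν be a norm on ℝ^d, let s ∈ {−1,1}ⁿ, and let σ be a permutation of {1,…,n}. Let C ⊆ ℝ^d × ℝ be a convex set such that for every (β,α) ∈ C: β ≠ 0, sᵢ(βᵀxᵢ + α) ≥ 0 for all i, and s_{σ(1)}(βᵀx_{σ(1)} + α) ≥ s_{σ(2)}(βᵀx_{σ(2)} + α) ≥ ⋯ ≥ s_{σ(n)}(βᵀx_{σ(n)} + α). Then for every (β,α) ∈ C, the ordered median objective OM_λ(r(x₁;β,α),…,r(xₙ;β,α)) equals (Σᵢ₌₁ⁿ λᵢ s_{σ(i)}(βᵀx_{σ(i)} + α)) / ν(β), and this function of (β,α) is quasiconcave on C (every superlevel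 set intersected with C is convex). -/
/-- On a cell `C` of the subdivision where the signs `s` of `βᵀxᵢ + α` and the sorting
permutation `σ` of the residuals are fixed, the ordered median objective of the
norm-based residuals `|βᵀxᵢ + α| / ν(β)` equals
`(∑ i, λᵢ s_{σ(i)} (βᵀx_{σ(i)} + α)) / ν(β)`, and this function is quasiconcave on `C`. -/
theorem stmt11 {d n : ℕ} (hd : 1 ≤ d) (hn : 1 ≤ n)
    (x : Fin n → Fin d → ℝ) (lam : Fin n → ℝ)
    (hmono : Antitone lam) (hpos : ∀ i, 0 ≤ lam i)
    (ν : Seminorm ℝ (Fin d → ℝ)) (hν : ∀ β : Fin d → ℝ, β ≠ 0 → 0 < ν β)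
    (s : Fin n → ℝ) (hs : ∀ i, s i = 1 ∨ s i = -1)
    (σ : Equiv.Perm (Fin n))
    (C : Set ((Fin d → ℝ) × ℝ)) (hC : Convex ℝ C)
    (hC0 : ∀ q ∈ C, q.1 ≠ 0)
    (hCsign : ∀ q ∈ C, ∀ i : Fin n, 0 ≤ s i * ((∑ ℓ : Fin d, q.1 ℓ * x i ℓ) + q.2))
    (hCord : ∀ q ∈ C, ∀ i j : Fin n, i ≤ j →
      s (σ j) * ((∑ ℓ : Fin d, q.1 ℓ * x (σ j) ℓ) + q.2) ≤
        s (σ i) * ((∑ ℓ : Fin d, q.1 ℓ * x (σ i) ℓ) + q.2)) :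
    (∀ q ∈ C,
      OM lam (fun i => |(∑ ℓ : Fin d, q.1 ℓ * x i ℓ) + q.2| / ν q.1) =
        (∑ i : Fin n, lam i * (s (σ i) * ((∑ ℓ : Fin d, q.1 ℓ * x (σ i) ℓ) + q.2))) /
          ν q.1) ∧
    QuasiconcaveOn ℝ C
      (fun q => OM lam (fun i => |(∑ ℓ : Fin d, q.1 ℓ * x i ℓ) + q.2| / ν q.1)) := by
  classical
  have key : ∀ q ∈ C,
      OM lam (fun i => |(∑ ℓ : Fin d, q.1 ℓ * x i ℓ) + q.2| / ν q.1) =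
        (∑ i : Fin n, lam i * (s (σ i) * ((∑ ℓ : Fin d, q.1 ℓ * x (σ i) ℓ) + q.2))) /
          ν q.1 := by
    intro q hq
    have hν' : 0 < ν q.1 := hν q.1 (hC0 q hq)
    set e : Fin n → ℝ := fun i => |(∑ ℓ : Fin d, q.1 ℓ * x i ℓ) + q.2| / ν q.1 with he
    have habs : ∀ i, |(∑ ℓ : Fin d, q.1 ℓ * x i ℓ) + q.2|
        = s i * ((∑ ℓ : Fin d, q.1 ℓ * x i ℓ) + q.2) := by
      intro i
      have hsi := hCsign q hq i
      rcases hs i with h | h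
      · rw [h, one_mul] at hsi ⊢; exact abs_of_nonneg hsi
      · rw [h] at hsi ⊢
        rw [neg_one_mul] at hsi ⊢
        exact abs_of_nonpos (by linarith)
    set τ : Equiv.Perm (Fin n) := Fin.revPerm.trans σ with hτ
    have hτapp : ∀ i, τ i = σ i.rev := fun i => rfl
    have hmonoe : Monotone (e ∘ τ) := by
      intro i j hij
      have hrev : j.rev ≤ i.rev := Fin.rev_le_rev.mpr hij
      have := hCord q hq j.rev i.rev hrev
      simp only [Function.comp, hτapp, he, habs]
      gcongr
    have hsort : e ∘ τ = e ∘ Tuple.sort e :=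
      Tuple.comp_sort_eq_comp_iff_monotone.mpr hmonoe
    unfold OM
    have : ∀ i : Fin n, e (Tuple.sort e i.rev) = e (σ i) := by
      intro i
      have := congrFun hsort.symm i.rev
      simp only [Function.comp, hτapp, Fin.rev_rev] at this
      exact this
    rw [Finset.sum_congr rfl (fun i _ => by rw [this i])]
    rw [Finset.sum_div]
    refine Finset.sum_congr rfl fun i _ => ?_
    rw [he]
    simp only [habs (σ i)]
    ring
  refine ⟨key, ?_⟩
  intro c
  rintro p ⟨hpC, hpc⟩ q ⟨hqC, hqc⟩ a b ha hb hab
  have hmem : a • p + b • q ∈ C := hC hpC hqC ha hb hab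
  refine ⟨hmem, ?_⟩
  set N : (Fin d → ℝ) × ℝ → ℝ := fun r =>
    ∑ i : Fin n, lam i * (s (σ i) * ((∑ ℓ : Fin d, r.1 ℓ * x (σ i) ℓ) + r.2)) with hN
  have hN0 : ∀ r ∈ C, 0 ≤ N r := by
    intro r hr
    exact Finset.sum_nonneg fun i _ => mul_nonneg (hpos i) (hCsign r hr (σ i))
  have hNlin : N (a • p + b • q) = a * N p + b * N q := by
    simp only [hN, Finset.mul_sum]
    rw [← Finset.sum_add_distrib]
    refine Finset.sum_congr rfl fun i _ => ?_
    have h1 : (∑ ℓ : Fin d, (a • p + b • q).1 ℓ * x (σ i) ℓ)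
        = a * (∑ ℓ : Fin d, p.1 ℓ * x (σ i) ℓ) + b * (∑ ℓ : Fin d, q.1 ℓ * x (σ i) ℓ) := by
      simp only [Prod.fst_add, Prod.smul_fst, Pi.add_apply, Pi.smul_apply, smul_eq_mul,
        Finset.mul_sum, ← Finset.sum_add_distrib]
      exact Finset.sum_congr rfl fun ℓ _ => by ring
    have h2 : (a • p + b • q).2 = a * p.2 + b * q.2 := rfl
    rw [h1, h2]; ring
  have hνc : ν ((a • p + b • q).1) ≤ a * ν p.1 + b * ν q.1 := by
    have h1 : (a • p + b • q).1 = a • p.1 + b • q.1 := rfl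
    rw [h1]
    calc ν (a • p.1 + b • q.1) ≤ ν (a • p.1) + ν (b • q.1) := map_add_le_add ν _ _
      _ = a * ν p.1 + b * ν q.1 := by
          rw [map_smul_eq_mul, map_smul_eq_mul, Real.norm_eq_abs, Real.norm_eq_abs,
            abs_of_nonneg ha, abs_of_nonneg hb]
  have hν' : 0 < ν ((a • p + b • q).1) := hν _ (hC0 _ hmem)
  beta_reduce at hpc hqc ⊢
  rw [key _ hmem]
  rw [key p hpC] at hpc
  rw [key q hqC] at hqc
  rcases le_or_gt c 0 with hc | hc
  · exact hc.trans (div_nonneg (hN0 _ hmem) hν'.le)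
  · have hνp := hν p.1 (hC0 p hpC)
    have hνq := hν q.1 (hC0 q hqC)
    have h1 : c * ν p.1 ≤ N p := (le_div_iff₀ hνp).mp hpc
    have h2 : c * ν q.1 ≤ N q := (le_div_iff₀ hνq).mp hqc
    rw [le_div_iff₀ hν']
    show c * ν ((a • p + b • q).1) ≤ N (a • p + b • q)
    rw [hNlin]
    calc c * ν ((a • p + b • q).1) ≤ c * (a * ν p.1 + b * ν q.1) := by
          exact mul_le_mul_of_nonneg_left hνc hc.le
      _ = a * (c * ν p.1) + b * (c * ν q.1) := by ring
      _ ≤ a * N p + b * N q := by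
          exact add_le_add (mul_le_mul_of_nonneg_left h1 ha) (mul_le_mul_of_nonneg_left h2 hb)
end

section
/- Let n ≥ 1, let λ₁ ≥ λ₂ ≥ ⋯ ≥ λₙ ≥ 0 be real weights, let T ≥ 0, and let a, b ∈ ℝⁿ with nonnegative entries satisfy |aᵢ − bᵢ| ≤ T for all i. Then |OM_λ(a) − OM_λ(b)| ≤ OM_λ(T,…,T) = T · Σᵢ₌₁ⁿ λᵢ. -/
lemma sorted_le_aux {n : ℕ} (e f : Fin n → ℝ) (T : ℝ)
    (h : ∀ i, e i ≤ f i + T) (k : Fin n) :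
    e (Tuple.sort e k) ≤ f (Tuple.sort f k) + T := by
  set σ := Tuple.sort e
  set τ := Tuple.sort f
  have hS : ((Finset.Ici k).image σ ∩ (Finset.Iic k).image τ).Nonempty := by
    rw [← Finset.card_pos]
    have hcard : ((Finset.Ici k).image σ).card + ((Finset.Iic k).image τ).card
        = ((Finset.Ici k).image σ ∪ (Finset.Iic k).image τ).card
          + ((Finset.Ici k).image σ ∩ (Finset.Iic k).image τ).card :=
      (Finset.card_union_add_card_inter _ _).symm
    have h1 : ((Finset.Ici k).image σ).card = n - k :=
      by rw [Finset.card_image_of_injective _ σ.injective, Fin.card_Ici]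
    have h2 : ((Finset.Iic k).image τ).card = k + 1 :=
      by rw [Finset.card_image_of_injective _ τ.injective, Fin.card_Iic]
    have h3 : ((Finset.Ici k).image σ ∪ (Finset.Iic k).image τ).card ≤ n := by
      exact (Finset.card_le_univ _).trans (by simp)
    have hk : (k : ℕ) < n := k.isLt
    omega
  obtain ⟨j, hj⟩ := hS
  rw [Finset.mem_inter] at hj
  obtain ⟨hj1, hj2⟩ := hj
  obtain ⟨i, hi, rfl⟩ := Finset.mem_image.mp hj1
  obtain ⟨m, hm, hjm⟩ := Finset.mem_image.mp hj2
  have h1 : e (σ k) ≤ e (σ i) := Tuple.monotone_sort e (Finset.mem_Ici.mp hi)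
  have h2 : f (τ m) ≤ f (τ k) := Tuple.monotone_sort f (Finset.mem_Iic.mp hm)
  calc e (σ k) ≤ e (σ i) := h1
    _ ≤ f (σ i) + T := h (σ i)
    _ = f (τ m) + T := by rw [hjm]
    _ ≤ f (τ k) + T := by linarith

/-- If the nonnegative vectors `a` and `b` differ componentwise by at most `T`, then
`|OM_λ(a) − OM_λ(b)| ≤ OM_λ(T,…,T) = T · ∑ᵢ λᵢ`. -/
theorem stmt12 {n : ℕ} (hn : 1 ≤ n) (lam : Fin n → ℝ)
    (hmono : Antitone lam) (hpos : ∀ i, 0 ≤ lam i)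
    (T : ℝ) (hT : 0 ≤ T) (a b : Fin n → ℝ)
    (ha : ∀ i, 0 ≤ a i) (hb : ∀ i, 0 ≤ b i) (hab : ∀ i, |a i - b i| ≤ T) :
    |OM lam a - OM lam b| ≤ OM lam (fun _ => T) ∧
    OM lam (fun _ => T) = T * ∑ i : Fin n, lam i := by
  have hconst : OM lam (fun _ => T) = T * ∑ i : Fin n, lam i := by
    simp [OM, Finset.mul_sum, mul_comm]
  refine ⟨?_, hconst⟩
  rw [hconst]
  have hab1 : ∀ i, a i ≤ b i + T := fun i => by
    have := abs_le.mp (hab i); linarith [this.2]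
  have hab2 : ∀ i, b i ≤ a i + T := fun i => by
    have := abs_le.mp (hab i); linarith [this.1]
  have key : ∀ k : Fin n, |a (Tuple.sort a k) - b (Tuple.sort b k)| ≤ T := by
    intro k
    rw [abs_sub_le_iff]
    constructor
    · linarith [sorted_le_aux a b T hab1 k]
    · linarith [sorted_le_aux b a T hab2 k]
  have : OM lam a - OM lam b
      = ∑ i : Fin n, lam i * (a (Tuple.sort a i.rev) - b (Tuple.sort b i.rev)) := by
    simp [OM, mul_sub, Finset.sum_sub_distrib]
  rw [this, mul_comm]
  calc |∑ i : Fin n, lam i * (a (Tuple.sort a i.rev) - b (Tuple.sort b i.rev))|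
      ≤ ∑ i : Fin n, |lam i * (a (Tuple.sort a i.rev) - b (Tuple.sort b i.rev))| :=
        Finset.abs_sum_le_sum_abs _ _
    _ ≤ ∑ i : Fin n, lam i * T := by
        apply Finset.sum_le_sum
        intro i _
        rw [abs_mul, abs_of_nonneg (hpos i)]
        exact mul_le_mul_of_nonneg_left (key i.rev) (hpos i)
    _ = (∑ i : Fin n, lam i) * T := by rw [← Finset.sum_mul]
end

section
/- Let E be a real normed space, let x₁,…,xₙ ∈ E and x₁′,…,xₙ′ ∈ E, let p ≥ 1, let λ₁ ≥ λ₂ ≥ ⋯ ≥ λₙ ≥ 0, and let T = max_{i=1,…,n} ‖xᵢ − xᵢ′‖. For an arrangement 𝕂 = (H₁,…,H_p) of p hyperplanes H_j = {y ∈ E : f_j(y) + α_j = 0} with f_j nonzero continuous linear functionals and α_j ∈ ℝ, define the residual of a point x as ε_x(𝕂) = min_{j=1,…,p} inf{‖x − y‖ : y ∈ H_j}, and define G(𝕂) = OM_λ(ε_{x₁}(𝕂),…,ε_{xₙ}(𝕂)) and G′(𝕂) = OM_λ(ε_{x₁′}(𝕂),…,ε_{xₙ′}(𝕂)). If ℍ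 minimizes G over all arrangements of p hyperplanes and ℍ′ minimizes G′ over all arrangements of p hyperplanes, then |G′(ℍ′) − G(ℍ)| ≤ 2 · OM_λ(T,…,T) = 2T · Σᵢ₌₁ⁿ λᵢ. -/
/-- The residual of a point `x` with respect to an arrangement `K` of `p` hyperplanes
`H_j = {y : f_j y + α_j = 0}`: the least distance from `x` to any of the hyperplanes. -/
noncomputable def resid {E : Type*} [NormedAddCommGroup E] [NormedSpace ℝ E] {p : ℕ}
    (K : Fin p → (E →L[ℝ] ℝ) × ℝ) (x : E) : ℝ :=
  ⨅ j : Fin p, Metric.infDist x {y : E | (K j).1 y + (K j).2 = 0}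

section OrderedMedian

variable {n : ℕ} {lam : Fin n → ℝ}

theorem OM_const (lam : Fin n → ℝ) (c : ℝ) : OM lam (fun _ => c) = c * ∑ i, lam i := by
  simp only [OM, Finset.mul_sum, mul_comm]

theorem sum_mul_comp_perm_le_OM (hlam : Antitone lam) (e : Fin n → ℝ) (σ : Equiv.Perm (Fin n)) :
    ∑ i, lam i * e (σ i) ≤ OM lam e := by
  set π : Equiv.Perm (Fin n) := Fin.revPerm.trans (Tuple.sort e)
  have hsorted : Antitone (e ∘ π) :=
    (Tuple.monotone_sort e).comp_antitone fun _ _ => Fin.rev_le_rev.2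
  calc ∑ i, lam i * e (σ i) = ∑ i, lam i * (e ∘ π) ((σ.trans π.symm) i) := by
        simp [Equiv.apply_symm_apply]
    _ ≤ ∑ i, lam i * (e ∘ π) i := (hlam.monovary hsorted).sum_mul_comp_perm_le_sum_mul
    _ = OM lam e := rfl

theorem OM_le_OM_add_of_le_add (hlam : Antitone lam) (hpos : ∀ i, 0 ≤ lam i)
    {e f : Fin n → ℝ} {c : ℝ} (h : ∀ i, e i ≤ f i + c) :
    OM lam e ≤ OM lam f + c * ∑ i, lam i := by
  set π : Equiv.Perm (Fin n) := Fin.revPerm.trans (Tuple.sort e)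
  calc OM lam e = ∑ i, lam i * e (π i) := rfl
    _ ≤ ∑ i, lam i * (f (π i) + c) :=
        Finset.sum_le_sum fun i _ => mul_le_mul_of_nonneg_left (h _) (hpos i)
    _ = ∑ i, lam i * f (π i) + c * ∑ i, lam i := by
        simp only [mul_add, Finset.sum_add_distrib, Finset.mul_sum, mul_comm]
    _ ≤ OM lam f + c * ∑ i, lam i := by
        gcongr
        exact sum_mul_comp_perm_le_OM hlam f π

end OrderedMedian

section Residual

variable {E : Type*} [NormedAddCommGroup E] [NormedSpace ℝ E] {p : ℕ}

theorem resid_le_resid_add_norm_sub (K : Fin p → (E →L[ℝ] ℝ) × ℝ) (a b : E) :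
    resid K a ≤ resid K b + ‖a - b‖ := by
  rcases isEmpty_or_nonempty (Fin p) with hp | hp
  · simp [resid]
  · rw [← sub_le_iff_le_add, ← dist_eq_norm]
    refine le_ciInf fun j => sub_le_iff_le_add.2 ?_
    calc resid K a ≤ Metric.infDist a {y : E | (K j).1 y + (K j).2 = 0} :=
          ciInf_le (Set.finite_range _).bddBelow j
      _ ≤ _ := Metric.infDist_le_infDist_add_dist

theorem OM_resid_le_OM_resid_add {n : ℕ} {lam : Fin n → ℝ} (hlam : Antitone lam)
    (hpos : ∀ i, 0 ≤ lam i) (K : Fin p → (E →L[ℝ] ℝ) × ℝ) {y z : Fin n → E} {T : ℝ}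
    (hyz : ∀ i, ‖y i - z i‖ ≤ T) :
    OM lam (fun i => resid K (y i)) ≤ OM lam (fun i => resid K (z i)) + T * ∑ i, lam i :=
  OM_le_OM_add_of_le_add hlam hpos fun i =>
    (resid_le_resid_add_norm_sub K (y i) (z i)).trans (add_le_add_right (hyz i) _)

end Residual

theorem stmt14_general {E : Type*} [NormedAddCommGroup E] [NormedSpace ℝ E]
    {n p : ℕ}
    (x x' : Fin n → E) (lam : Fin n → ℝ)
    (hmono : Antitone lam) (hpos : ∀ i, 0 ≤ lam i)
    (T : ℝ) (hT : IsGreatest (Set.range fun i => ‖x i - x' i‖) T)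
    (H H' : Fin p → (E →L[ℝ] ℝ) × ℝ)
    (hH0 : ∀ j, (H j).1 ≠ 0) (hH'0 : ∀ j, (H' j).1 ≠ 0)
    (hHopt : ∀ K : Fin p → (E →L[ℝ] ℝ) × ℝ, (∀ j, (K j).1 ≠ 0) →
      OM lam (fun i => resid H (x i)) ≤ OM lam (fun i => resid K (x i)))
    (hH'opt : ∀ K : Fin p → (E →L[ℝ] ℝ) × ℝ, (∀ j, (K j).1 ≠ 0) →
      OM lam (fun i => resid H' (x' i)) ≤ OM lam (fun i => resid K (x' i))) :
    |OM lam (fun i => resid H' (x' i)) - OM lam (fun i => resid H (x i))| ≤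
        2 * OM lam (fun _ => T) ∧
    OM lam (fun _ => T) = T * ∑ i : Fin n, lam i := by
  have hdist : ∀ i, ‖x i - x' i‖ ≤ T := fun i => hT.2 ⟨i, rfl⟩
  have hdist' : ∀ i, ‖x' i - x i‖ ≤ T := fun i => norm_sub_rev (x i) (x' i) ▸ hdist i
  have hslack : 0 ≤ T * ∑ i, lam i := by
    obtain ⟨i, -⟩ := hT.1
    exact mul_nonneg ((norm_nonneg _).trans (hdist i)) (Finset.sum_nonneg fun i _ => hpos i)
  have hH'_le := (hH'opt H hH0).trans (OM_resid_le_OM_resid_add hmono hpos H hdist')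
  have hH_le := (hHopt H' hH'0).trans (OM_resid_le_OM_resid_add hmono hpos H' hdist)
  refine ⟨?_, OM_const lam T⟩
  rw [OM_const, abs_sub_le_iff]
  constructor <;> linarith

/-- Aggregation error bound: if the aggregated points `xᵢ′` satisfy
`T = maxᵢ ‖xᵢ − xᵢ′‖`, `ℍ` is an optimal arrangement of `p` hyperplanes for the points
`xᵢ` and `ℍ′` is an optimal arrangement for the points `xᵢ′` (w.r.t. the ordered median
of the residuals), then the optimal values differ by at most
`2·OM_λ(T,…,T) = 2T·∑ᵢ λᵢ`. -/
theorem stmt14 {E : Type*} [NormedAddCommGroup E] [NormedSpace ℝ E]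
    {n p : ℕ} (hn : 1 ≤ n) (hp : 1 ≤ p)
    (x x' : Fin n → E) (lam : Fin n → ℝ)
    (hmono : Antitone lam) (hpos : ∀ i, 0 ≤ lam i)
    (T : ℝ) (hT : IsGreatest (Set.range fun i => ‖x i - x' i‖) T)
    (H H' : Fin p → (E →L[ℝ] ℝ) × ℝ)
    (hH0 : ∀ j, (H j).1 ≠ 0) (hH'0 : ∀ j, (H' j).1 ≠ 0)
    (hHopt : ∀ K : Fin p → (E →L[ℝ] ℝ) × ℝ, (∀ j, (K j).1 ≠ 0) →
      OM lam (fun i => resid H (x i)) ≤ OM lam (fun i => resid K (x i)))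
    (hH'opt : ∀ K : Fin p → (E →L[ℝ] ℝ) × ℝ, (∀ j, (K j).1 ≠ 0) →
      OM lam (fun i => resid H' (x' i)) ≤ OM lam (fun i => resid K (x' i))) :
    |OM lam (fun i => resid H' (x' i)) - OM lam (fun i => resid H (x i))| ≤
        2 * OM lam (fun _ => T) ∧
    OM lam (fun _ => T) = T * ∑ i : Fin n, lam i :=
  stmt14_general x x' lam hmono hpos T hT H H' hH0 hH'0 hHopt hH'opt
end

section
/- Pseudo-halving property: let x₁,…,xₙ ∈ ℝ^d with d ≥ 1, and let ν be a norm on ℝ^d. If (β*, α*) with β* ≠ 0 minimizes the median objective Σᵢ₌₁ⁿ |βᵀxᵢ + α| / ν(β) over all (β, α) ∈ ℝ^d × ℝ with β ≠ 0, then each open halfspace determined by the hyperplane H(β*,α*) contains at most n/2 of the points: 2 · #{i : β*ᵀxᵢ + α* < 0} ≤ n and 2 · #{i : β*ᵀxᵢ + α* > 0} ≤ n. -/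
open Finset

lemma halve_aux {n : ℕ} (t : Fin n → ℝ)
    (hopt : ∀ α : ℝ, ∑ i, |t i| ≤ ∑ i, |t i + α|) :
    2 * (Finset.univ.filter (fun i => t i < 0)).card ≤ n := by
  set s := Finset.univ.filter (fun i : Fin n => t i < 0) with hs
  rcases s.eq_empty_or_nonempty with h | h
  · simp [h]
  · set ε := s.inf' h (fun i => -(t i)) with hε
    have hεpos : 0 < ε := by
      rw [hε, Finset.lt_inf'_iff]
      intro i hi
      have : t i < 0 := (Finset.mem_filter.mp hi).2
      linarith
    have key : ∑ i, |t i + ε| = (∑ i ∈ s, (|t i| - ε)) + ∑ i ∈ sᶜ, (|t i| + ε) := by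
      rw [← Finset.sum_add_sum_compl s (fun i => |t i + ε|)]
      congr 1
      · apply Finset.sum_congr rfl
        intro i hi
        have h1 : t i < 0 := (Finset.mem_filter.mp hi).2
        have h2 : ε ≤ -(t i) := Finset.inf'_le _ hi
        rw [abs_of_nonpos (by linarith), abs_of_neg h1]; ring
      · apply Finset.sum_congr rfl
        intro i hi
        have h1 : ¬ t i < 0 := by
          have := Finset.mem_compl.mp hi
          simpa [hs] using this
        push_neg at h1
        rw [abs_of_nonneg (by linarith), abs_of_nonneg h1]
    have h2 := hopt ε
    rw [key, Finset.sum_sub_distrib, Finset.sum_add_distrib, Finset.sum_const,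
      Finset.sum_const] at h2
    rw [← Finset.sum_add_sum_compl s (fun i => |t i|)] at h2
    simp only [nsmul_eq_mul] at h2
    have hcard : s.card + sᶜ.card = n := by
      simpa using Finset.card_add_card_compl s
    have hle : (s.card : ℝ) ≤ sᶜ.card := by nlinarith
    have hle' : s.card ≤ sᶜ.card := by exact_mod_cast hle
    omega

/-- Pseudo-halving property: every optimal median hyperplane `H(β⋆,α⋆)` (minimizing the
sum of the norm-based residuals `|βᵀxᵢ + α| / ν(β)`) leaves at most `n/2` of the points
in each of the two open halfspaces it determines. -/
theorem stmt15 {n d : ℕ} (hd : 1 ≤ d) (x : Fin n → Fin d → ℝ)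
    (ν : Seminorm ℝ (Fin d → ℝ)) (hν : ∀ β : Fin d → ℝ, β ≠ 0 → 0 < ν β)
    (βs : Fin d → ℝ) (αs : ℝ) (hβ : βs ≠ 0)
    (hopt : ∀ (β : Fin d → ℝ) (α : ℝ), β ≠ 0 →
      (∑ i : Fin n, |(∑ ℓ : Fin d, βs ℓ * x i ℓ) + αs| / ν βs) ≤
        ∑ i : Fin n, |(∑ ℓ : Fin d, β ℓ * x i ℓ) + α| / ν β) :
    2 * Nat.card {i : Fin n // (∑ ℓ : Fin d, βs ℓ * x i ℓ) + αs < 0} ≤ n ∧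
    2 * Nat.card {i : Fin n // 0 < (∑ ℓ : Fin d, βs ℓ * x i ℓ) + αs} ≤ n := by
  have hν0 : 0 < ν βs := hν βs hβ
  set t : Fin n → ℝ := fun i => (∑ ℓ : Fin d, βs ℓ * x i ℓ) + αs with ht
  have hopt' : ∀ α : ℝ, ∑ i, |t i| ≤ ∑ i, |t i + α| := by
    intro α
    have h := hopt βs (αs + α) hβ
    rw [← Finset.sum_div, ← Finset.sum_div, div_le_div_iff_of_pos_right hν0] at h
    calc ∑ i, |t i| = ∑ i : Fin n, |(∑ ℓ : Fin d, βs ℓ * x i ℓ) + αs| := rfl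
      _ ≤ ∑ i : Fin n, |(∑ ℓ : Fin d, βs ℓ * x i ℓ) + (αs + α)| := h
      _ = ∑ i, |t i + α| := by
          apply Finset.sum_congr rfl; intro i _; rw [ht]; ring_nf
  constructor
  · have := halve_aux t hopt'
    rwa [Nat.card_eq_fintype_card, Fintype.card_subtype]
  · have hopt'' : ∀ α : ℝ, ∑ i, |(-t) i| ≤ ∑ i, |(-t) i + α| := by
      intro α
      have h := hopt' (-α)
      calc ∑ i, |(-t) i| = ∑ i, |t i| := by simp [abs_neg]
        _ ≤ ∑ i, |t i + (-α)| := h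
        _ = ∑ i, |(-t) i + α| := by
            apply Finset.sum_congr rfl; intro i _
            rw [show (-t) i + α = -(t i + -α) by simp; ring, abs_neg]
    have := halve_aux (-t) hopt''
    have heq : (Finset.univ.filter (fun i => (-t) i < 0)) =
        (Finset.univ.filter (fun i : Fin n => 0 < t i)) := by
      apply Finset.filter_congr; intro i _; simp
    rw [heq] at this
    rwa [Nat.card_eq_fintype_card, Fintype.card_subtype]
end

section
/- Weak incidence property: let x₁,…,xₙ ∈ ℝ^d with n ≥ d ≥ 1, let ν be a norm on ℝ^d, and suppose the affine hull of {x₁,…,xₙ} has dimension at least d − 1. Then there exists (β*, α*) with β* ≠ 0 minimizing the median objective Σᵢ₌₁ⁿ |βᵀxᵢ + α| / ν(β) over all (β, α) ∈ ℝ^d × ℝ with β ≠ 0, such that the hyperplane H(β*,α*) passes through d affinely independent data points: there are indices i₁,…,i_d with β*ᵀx_{i_k} + α* = 0 for k = 1,…,d and x_{i₁},…,x_{i_d} affinely independent. -/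
/-!
Write a hyperplane as `p = (β, α)` and the `i`-th data point as the linear functional
`eval x i : p ↦ β ⬝ᵥ xᵢ + α`. A minimizer exists by compactness once `‖β‖ = 1`, since a large
`|α|` never helps. Among minimizers take one whose incident functionals span a space of
maximal dimension. Were it below `d`, some `q` not proportional to `p` would vanish on all
incident points; sliding to `p ± t • q` until the nearest further point is hit keeps the cost
affine in `t` while `ν` is convex, so the endpoint is still optimal and its incident span is
larger. Finally, `d` linearly independent incident functionals are `d` affinely independent
incident points.
-/

open Module Submodule

theorem abs_add_add_abs_sub_of_abs_le {a c : ℝ} (h : |c| ≤ |a|) :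
    |a + c| + |a - c| = 2 * |a| := by
  obtain ⟨h₁, h₂⟩ := abs_le.mp h
  rcases le_total 0 a with ha | ha
  · rw [abs_of_nonneg ha] at h₁ h₂ ⊢
    rw [abs_of_nonneg (by linarith), abs_of_nonneg (by linarith)]
    ring
  · rw [abs_of_nonpos ha] at h₁ h₂ ⊢
    rw [abs_of_nonpos (by linarith), abs_of_nonpos (by linarith)]
    ring

theorem exists_nearest_root {ι : Type*} [Fintype ι] (a b : ι → ℝ) (hb : ∃ i, b i ≠ 0) :
    ∃ (t : ℝ) (j : ι), b j ≠ 0 ∧ a j + t * b j = 0 ∧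
      ∀ i, |a i + t * b i| + |a i - t * b i| = 2 * |a i| := by
  classical
  obtain ⟨j, hj, hmin⟩ := Finset.exists_min_image {i | b i ≠ 0} (fun i => |a i| / |b i|)
    (by simpa [Finset.Nonempty] using hb)
  rw [Finset.mem_filter_univ] at hj
  refine ⟨-a j / b j, j, hj, by field_simp; ring, fun i => ?_⟩
  refine abs_add_add_abs_sub_of_abs_le ?_
  by_cases hbi : b i = 0
  · simp [hbi]
  · have := hmin i ((Finset.mem_filter_univ i).mpr hbi)
    rw [abs_mul, abs_div, abs_neg]
    rwa [le_div_iff₀ (abs_pos.mpr hbi)] at this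

theorem exists_le_of_forall_lt_exists_lt {α : Type*} {s : Set α} {f : α → ℕ} {d : ℕ}
    (hs : s.Nonempty) (hbdd : BddAbove (f '' s)) (h : ∀ a ∈ s, f a < d → ∃ b ∈ s, f a < f b) :
    ∃ a ∈ s, d ≤ f a := by
  obtain ⟨a, ha, hfa⟩ := Nat.sSup_mem (hs.image f) hbdd
  refine ⟨a, ha, not_lt.mp fun hlt => ?_⟩
  obtain ⟨b, hb, hab⟩ := h a ha hlt
  have := le_csSup hbdd (Set.mem_image_of_mem f hb)
  omega

theorem exists_linearIndependent_comp_of_le_finrank {K V ι : Type*} [DivisionRing K]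
    [AddCommGroup V] [Module K V] [Finite ι] (v : ι → V) {m : ℕ}
    (h : m ≤ finrank K (span K (Set.range v))) : ∃ f : Fin m → ι, LinearIndependent K (v ∘ f) := by
  obtain ⟨κ, a, ha, hspan, hli⟩ := exists_linearIndependent' K v
  have : Finite κ := Finite.of_injective a ha
  have : Fintype κ := Fintype.ofFinite κ
  rw [← hspan, finrank_span_eq_card hli] at h
  obtain ⟨e⟩ : Nonempty (Fin m ↪ κ) :=
    Function.Embedding.nonempty_of_card_le (by rwa [Fintype.card_fin])
  exact ⟨a ∘ e, hli.comp e e.injective⟩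

theorem exists_mem_dualCoannihilator_notMem_span_singleton {K V : Type*} [Field K]
    [AddCommGroup V] [Module K V] [FiniteDimensional K V] (W : Subspace K (Module.Dual K V))
    (h : finrank K W + 2 ≤ finrank K V) (p : V) :
    ∃ q ∈ W.dualCoannihilator, q ∉ K ∙ p := by
  refine SetLike.not_le_iff_exists.mp fun hle => ?_
  have h1 := Submodule.finrank_mono hle
  have h2 : finrank K (K ∙ p) ≤ 1 := by simpa using finrank_span_le_card ({p} : Set V)
  have h3 := Subspace.finrank_add_finrank_dualCoannihilator_eq W
  omega

theorem Seminorm.continuous_of_finiteDimensional {E : Type*} [NormedAddCommGroup E]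
    [NormedSpace ℝ E] [FiniteDimensional ℝ E] (ν : Seminorm ℝ E) : Continuous ν :=
  continuousOn_univ.mp (ν.convexOn.continuousOn isOpen_univ)

theorem exists_affineIndependent_comp_of_le_finrank {k V P ι : Type*} [DivisionRing k]
    [AddCommGroup V] [Module k V] [AddTorsor V P] [Finite ι] [Nonempty ι] (p : ι → P) {m : ℕ}
    (h : m - 1 ≤ finrank k (affineSpan k (Set.range p)).direction) :
    ∃ f : Fin m → ι, AffineIndependent k (p ∘ f) := by
  obtain ⟨t, hts, hspan, hind⟩ := exists_affineIndependent k V (Set.range p)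
  have : Fintype t := ((Set.finite_range p).subset hts).fintype
  have : Nonempty t := by
    by_contra! ht
    rw [Set.isEmpty_coe_sort.mp ht, AffineSubspace.span_empty, eq_comm,
      affineSpan_eq_bot] at hspan
    exact Set.range_nonempty p |>.ne_empty hspan
  have hcard := hind.finrank_vectorSpan_add_one
  rw [Subtype.range_coe, ← direction_affineSpan, hspan] at hcard
  obtain ⟨e⟩ : Nonempty (Fin m ↪ t) :=
    Function.Embedding.nonempty_of_card_le (by rw [Fintype.card_fin, ← hcard]; omega)
  choose g hg using fun y : t => hts y.2
  refine ⟨g ∘ e, ?_⟩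
  convert hind.comp_embedding e using 1
  ext k
  exact hg (e k)

namespace MedianHyperplane

variable {ι : Type*} {d : ℕ}

def eval (x : ι → Fin d → ℝ) (i : ι) : Module.Dual ℝ ((Fin d → ℝ) × ℝ) where
  toFun p := p.1 ⬝ᵥ x i + p.2
  map_add' p q := by simp only [Prod.fst_add, Prod.snd_add, add_dotProduct]; ring
  map_smul' c p := by simp [smul_dotProduct, mul_add]

theorem eval_apply (x : ι → Fin d → ℝ) (i : ι) (p : (Fin d → ℝ) × ℝ) :
    eval x i p = p.1 ⬝ᵥ x i + p.2 := rfl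

theorem eq_zero_of_fst_eq_zero_of_eval_eq_zero {x : ι → Fin d → ℝ} {i : ι}
    {p : (Fin d → ℝ) × ℝ} (h1 : p.1 = 0) (h : eval x i p = 0) : p = 0 := by
  rw [eval_apply, h1, zero_dotProduct, zero_add] at h
  exact Prod.ext h1 h

theorem sum_smul_eval_eq_zero_iff (x : ι → Fin d → ℝ) (s : Finset ι) (w : ι → ℝ) :
    ∑ i ∈ s, w i • eval x i = 0 ↔ ∑ i ∈ s, w i = 0 ∧ ∑ i ∈ s, w i • x i = 0 := by
  have key : ∀ p : (Fin d → ℝ) × ℝ,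
      (∑ i ∈ s, w i • eval x i) p = p.1 ⬝ᵥ ∑ i ∈ s, w i • x i + p.2 * ∑ i ∈ s, w i := by
    intro p
    simp only [LinearMap.sum_apply, LinearMap.smul_apply, eval_apply, dotProduct_sum,
      dotProduct_smul, smul_eq_mul, Finset.mul_sum, mul_add, Finset.sum_add_distrib, mul_comm]
  constructor
  · intro h
    have hw : ∑ i ∈ s, w i = 0 := by simpa [key] using LinearMap.congr_fun h (0, 1)
    refine ⟨hw, dotProduct_eq_zero _ fun β => ?_⟩
    simpa [key, dotProduct_comm] using LinearMap.congr_fun h (β, 0)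
  · rintro ⟨hw, hx⟩
    exact LinearMap.ext fun p => by rw [key, hw, hx]; simp

theorem linearIndependent_eval_iff (x : ι → Fin d → ℝ) :
    LinearIndependent ℝ (eval x) ↔ AffineIndependent ℝ x := by
  rw [linearIndependent_iff', affineIndependent_iff]
  simp only [sum_smul_eval_eq_zero_iff, and_imp]

def incidentSpan (x : ι → Fin d → ℝ) (p : (Fin d → ℝ) × ℝ) :
    Submodule ℝ (Module.Dual ℝ ((Fin d → ℝ) × ℝ)) :=
  span ℝ (eval x '' {i | eval x i p = 0})

theorem incidentSpan_mono {x : ι → Fin d → ℝ} {p p' : (Fin d → ℝ) × ℝ}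
    (h : ∀ i, eval x i p = 0 → eval x i p' = 0) : incidentSpan x p ≤ incidentSpan x p' :=
  span_mono (Set.image_mono h)

theorem mem_dualCoannihilator_incidentSpan_iff {x : ι → Fin d → ℝ} {p q : (Fin d → ℝ) × ℝ} :
    q ∈ (incidentSpan x p).dualCoannihilator ↔ ∀ i, eval x i p = 0 → eval x i q = 0 := by
  rw [mem_dualCoannihilator]
  refine ⟨fun h i hi => h _ (subset_span ⟨i, hi, rfl⟩), fun h φ hφ => ?_⟩
  induction hφ using span_induction with
  | mem φ hφ => obtain ⟨i, hi, rfl⟩ := hφ; exact h i hi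
  | zero => rfl
  | add φ ψ _ _ hφ hψ => rw [LinearMap.add_apply, hφ, hψ, add_zero]
  | smul c φ _ hφ => rw [LinearMap.smul_apply, hφ, smul_zero]

theorem le_finrank_incidentSpan_iff [Finite ι] {x : ι → Fin d → ℝ} {p : (Fin d → ℝ) × ℝ}
    {m : ℕ} : m ≤ finrank ℝ (incidentSpan x p) ↔
      ∃ idx : Fin m → ι, (∀ k, eval x (idx k) p = 0) ∧ AffineIndependent ℝ (x ∘ idx) := by
  constructor
  · intro h
    rw [incidentSpan, Set.image_eq_range] at h
    obtain ⟨f, hf⟩ := exists_linearIndependent_comp_of_le_finrank _ h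
    exact ⟨Subtype.val ∘ f, fun k => (f k).2, (linearIndependent_eval_iff _).mp hf⟩
  · rintro ⟨idx, hzero, hind⟩
    have hli := (linearIndependent_eval_iff (x ∘ idx)).mpr hind
    calc m = finrank ℝ (span ℝ (Set.range (eval (x ∘ idx)))) := by
          rw [finrank_span_eq_card hli, Fintype.card_fin]
      _ ≤ finrank ℝ (incidentSpan x p) := by
          refine Submodule.finrank_mono (span_mono ?_)
          rintro _ ⟨k, rfl⟩
          exact ⟨idx k, hzero k, rfl⟩

variable [Fintype ι]

def cost (x : ι → Fin d → ℝ) (p : (Fin d → ℝ) × ℝ) : ℝ := ∑ i, |eval x i p|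

theorem cost_nonneg (x : ι → Fin d → ℝ) (p : (Fin d → ℝ) × ℝ) : 0 ≤ cost x p :=
  Finset.sum_nonneg fun _ _ => abs_nonneg _

theorem cost_smul (x : ι → Fin d → ℝ) (p : (Fin d → ℝ) × ℝ) {c : ℝ} (hc : 0 ≤ c) :
    cost x (c • p) = c * cost x p := by
  simp only [cost, map_smul, smul_eq_mul, abs_mul, abs_of_nonneg hc, Finset.mul_sum]

theorem continuous_cost (x : ι → Fin d → ℝ) : Continuous (cost x) :=
  continuous_finsetSum _ fun i _ => (eval x i).continuous_of_finiteDimensional.abs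

theorem cost_le_cost_of_le_abs {x : ι → Fin d → ℝ} {β : Fin d → ℝ} {α C : ℝ}
    (hC : ∀ i, |β ⬝ᵥ x i| ≤ C) (hα : 2 * C ≤ |α|) : cost x (β, 0) ≤ cost x (β, α) := by
  refine Finset.sum_le_sum fun i _ => ?_
  have h := abs_sub_abs_le_abs_sub α (-(β ⬝ᵥ x i))
  rw [sub_neg_eq_add, add_comm, abs_neg] at h
  simp only [eval_apply, add_zero]
  linarith [hC i]

theorem exists_optimal [NeZero d] (x : ι → Fin d → ℝ) (ν : Seminorm ℝ (Fin d → ℝ))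
    (hν : ∀ β : Fin d → ℝ, β ≠ 0 → 0 < ν β) :
    ∃ (m : ℝ) (p : (Fin d → ℝ) × ℝ), 0 ≤ m ∧ p.1 ≠ 0 ∧ cost x p = m * ν p.1 ∧
      ∀ r : (Fin d → ℝ) × ℝ, r.1 ≠ 0 → m * ν r.1 ≤ cost x r := by
  set S := Metric.sphere (0 : Fin d → ℝ) 1
  have hS : IsCompact S := isCompact_sphere 0 1
  have hSν : ∀ β ∈ S, 0 < ν β := fun β hβ => hν β (ne_zero_of_mem_unit_sphere ⟨β, hβ⟩)
  obtain ⟨C, hC⟩ := hS.exists_bound_of_continuousOn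
    ((continuous_cost x).comp (Continuous.prodMk_left 0)).continuousOn
  have hbound : ∀ β ∈ S, ∀ i, |β ⬝ᵥ x i| ≤ C := fun β hβ i =>
    calc |β ⬝ᵥ x i| = |eval x i (β, 0)| := by rw [eval_apply, add_zero]
      _ ≤ cost x (β, 0) := Finset.single_le_sum (fun j _ => abs_nonneg (eval x j (β, 0)))
          (Finset.mem_univ i)
      _ ≤ C := (le_abs_self _).trans (hC β hβ)
  obtain ⟨β₀, hβ₀⟩ : S.Nonempty := NormedSpace.sphere_nonempty.mpr zero_le_one
  have hC0 : 0 ≤ C := (norm_nonneg _).trans (hC β₀ hβ₀)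
  set R : (Fin d → ℝ) × ℝ → ℝ := fun r => cost x r / ν r.1
  obtain ⟨p, ⟨hpS, -⟩, hpmin⟩ := (hS.prod isCompact_Icc).exists_isMinOn
    (⟨(β₀, 0), hβ₀, by simp only [Set.mem_Icc]; constructor <;> linarith⟩ :
      (S ×ˢ Set.Icc (-(2 * C)) (2 * C)).Nonempty)
    ((continuous_cost x).continuousOn.div
      (ν.continuous_of_finiteDimensional.comp continuous_fst).continuousOn
      fun r hr => (hSν _ hr.1).ne')
  have hmin : ∀ r : (Fin d → ℝ) × ℝ, r.1 ≠ 0 → R p ≤ R r := by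
    intro r hr
    have hr0 : 0 < ‖r.1‖ := norm_pos_iff.mpr hr
    set r' := ‖r.1‖⁻¹ • r
    have hr'S : r'.1 ∈ S := by
      rw [Prod.smul_fst, mem_sphere_zero_iff_norm, norm_smul, norm_inv, norm_norm,
        inv_mul_cancel₀ hr0.ne']
    have hRr' : R r' = R r := by
      simp only [R, r', cost_smul x r (inv_nonneg.mpr hr0.le), Prod.smul_fst, map_smul_eq_mul,
        norm_inv, norm_norm]
      exact mul_div_mul_left _ _ (inv_ne_zero hr0.ne')
    rw [← hRr']
    by_cases hα : |r'.2| ≤ 2 * C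
    · exact hpmin ⟨hr'S, abs_le.mp hα⟩
    · calc R p ≤ R (r'.1, 0) := hpmin ⟨hr'S, by simp only [Set.mem_Icc]; constructor <;> linarith⟩
        _ ≤ R r' := div_le_div_of_nonneg_right
            (cost_le_cost_of_le_abs (hbound _ hr'S) (not_le.mp hα).le) (hSν _ hr'S).le
  have hp1 : 0 < ν p.1 := hSν _ hpS
  refine ⟨R p, p, div_nonneg (cost_nonneg x p) hp1.le, ne_zero_of_mem_unit_sphere ⟨_, hpS⟩,
    (div_mul_cancel₀ _ hp1.ne').symm, fun r hr => (le_div_iff₀ (hν _ hr)).mp (hmin r hr)⟩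

section Optimal

variable (x : ι → Fin d → ℝ) (ν : Seminorm ℝ (Fin d → ℝ)) {m : ℝ}

theorem exists_optimal_incidentSpan_lt (hm : 0 ≤ m)
    (hopt : ∀ r : (Fin d → ℝ) × ℝ, r.1 ≠ 0 → m * ν r.1 ≤ cost x r)
    {p q : (Fin d → ℝ) × ℝ} (hp : cost x p = m * ν p.1)
    (hq : q ∈ (incidentSpan x p).dualCoannihilator) (hline : ∀ t : ℝ, p.1 + t • q.1 ≠ 0)
    (hq0 : ∃ i, eval x i q ≠ 0) :
    ∃ p' : (Fin d → ℝ) × ℝ, p'.1 ≠ 0 ∧ cost x p' = m * ν p'.1 ∧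
      incidentSpan x p < incidentSpan x p' := by
  have hzero := mem_dualCoannihilator_incidentSpan_iff.mp hq
  obtain ⟨t, j, hj, hroot, hbal⟩ :=
    exists_nearest_root (fun i => eval x i p) (fun i => eval x i q) hq0
  -- `cost` is affine on the segment `[p - t • q, p + t • q]` and `ν` is convex, so both ends
  -- stay optimal
  have hcost : cost x (p + t • q) + cost x (p - t • q) = 2 * cost x p := by
    simp only [cost, ← Finset.sum_add_distrib, Finset.mul_sum, map_add, map_sub, map_smul,
      smul_eq_mul, hbal]
  have hν : 2 * ν p.1 ≤ ν (p + t • q).1 + ν (p - t • q).1 :=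
    calc 2 * ν p.1 = ν ((p + t • q).1 + (p - t • q).1) := by
          rw [Prod.fst_add, Prod.fst_sub, add_add_sub_cancel, ← two_smul ℝ, map_smul_eq_mul,
            Real.norm_two]
      _ ≤ ν (p + t • q).1 + ν (p - t • q).1 := map_add_le_add ν _ _
  have hminus : (p - t • q).1 ≠ 0 := by
    rw [Prod.fst_sub, Prod.smul_fst, sub_eq_add_neg, ← neg_smul]
    exact hline (-t)
  have hle₁ := hopt (p + t • q) (hline t)
  have hle₂ := hopt _ hminus
  refine ⟨p + t • q, hline t, by nlinarith [mul_le_mul_of_nonneg_left hν hm], ?_⟩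
  refine lt_of_le_of_ne (incidentSpan_mono fun i hi => ?_) fun h => hj ?_
  · rw [map_add, map_smul, hi, hzero i hi, smul_zero, add_zero]
  · have hmem : eval x j ∈ incidentSpan x (p + t • q) := by
      refine subset_span ⟨j, ?_, rfl⟩
      show eval x j (p + t • q) = 0
      rwa [map_add, map_smul, smul_eq_mul]
    exact (mem_dualCoannihilator _).mp hq _ (h ▸ hmem)

theorem exists_optimal_finrank_lt (hm : 0 ≤ m)
    (hopt : ∀ r : (Fin d → ℝ) × ℝ, r.1 ≠ 0 → m * ν r.1 ≤ cost x r)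
    {f : Fin d → ι} (hf : AffineIndependent ℝ (x ∘ f))
    {p : (Fin d → ℝ) × ℝ} (hp1 : p.1 ≠ 0) (hp : cost x p = m * ν p.1)
    (hr : finrank ℝ (incidentSpan x p) < d) :
    ∃ p' : (Fin d → ℝ) × ℝ, p'.1 ≠ 0 ∧ cost x p' = m * ν p'.1 ∧
      finrank ℝ (incidentSpan x p) < finrank ℝ (incidentSpan x p') := by
  have i₀ : ι := f ⟨0, by omega⟩
  obtain ⟨q, hq, hqp⟩ := exists_mem_dualCoannihilator_notMem_span_singleton
    (incidentSpan x p) (by rw [finrank_prod, finrank_fin_fun, finrank_self]; omega) p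
  have hp_mem : p ∈ (incidentSpan x p).dualCoannihilator :=
    mem_dualCoannihilator_incidentSpan_iff.mpr fun _ hi => hi
  by_cases hline : ∃ t : ℝ, p.1 + t • q.1 = 0
  · -- the pencil of `p` and `q` contains a pure translation `p + t • q = (0, c)`
    obtain ⟨t, ht⟩ := hline
    have hu0 : p + t • q ≠ 0 := by
      intro h
      have ht0 : t ≠ 0 := by rintro rfl; rw [zero_smul, add_zero] at ht; exact hp1 ht
      refine hqp (mem_span_singleton.mpr ⟨-t⁻¹, ?_⟩)
      rw [eq_neg_of_add_eq_zero_left h, smul_neg, smul_smul, neg_mul, inv_mul_cancel₀ ht0,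
        neg_smul, one_smul, neg_neg]
    obtain ⟨p', hp'1, hp', hlt⟩ := exists_optimal_incidentSpan_lt x ν hm hopt hp
      (add_mem hp_mem (smul_mem _ t hq)) (fun s => by simpa [ht] using hp1)
      ⟨i₀, fun h => hu0 (eq_zero_of_fst_eq_zero_of_eval_eq_zero ht h)⟩
    exact ⟨p', hp'1, hp', Submodule.finrank_lt_finrank_of_lt hlt⟩
  push Not at hline
  by_cases hq0 : ∃ i, eval x i q ≠ 0
  · obtain ⟨p', hp'1, hp', hlt⟩ := exists_optimal_incidentSpan_lt x ν hm hopt hp hq hline hq0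
    exact ⟨p', hp'1, hp', Submodule.finrank_lt_finrank_of_lt hlt⟩
  · push Not at hq0
    have hq1 : q.1 ≠ 0 := fun h =>
      hqp (by rw [eq_zero_of_fst_eq_zero_of_eval_eq_zero h (hq0 i₀)]; exact zero_mem _)
    have hcost : cost x q = 0 := by simp [cost, hq0]
    refine ⟨q, hq1, by nlinarith [hopt q hq1, mul_nonneg hm (apply_nonneg ν q.1)], ?_⟩
    exact hr.trans_le (le_finrank_incidentSpan_iff.mpr ⟨f, fun k => hq0 _, hf⟩)

theorem exists_optimal_le_finrank_incidentSpan (hm : 0 ≤ m)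
    (hopt : ∀ r : (Fin d → ℝ) × ℝ, r.1 ≠ 0 → m * ν r.1 ≤ cost x r)
    {f : Fin d → ι} (hf : AffineIndependent ℝ (x ∘ f))
    {p₀ : (Fin d → ℝ) × ℝ} (hp₀1 : p₀.1 ≠ 0) (hp₀ : cost x p₀ = m * ν p₀.1) :
    ∃ p : (Fin d → ℝ) × ℝ, p.1 ≠ 0 ∧ cost x p = m * ν p.1 ∧
      d ≤ finrank ℝ (incidentSpan x p) := by
  have hbdd : ∀ p, finrank ℝ (incidentSpan x p) ≤ d + 1 := fun p =>
    (Submodule.finrank_le _).trans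
      (by rw [Subspace.dual_finrank_eq, finrank_prod, finrank_fin_fun, finrank_self])
  obtain ⟨p, ⟨hp1, hp⟩, hd⟩ := exists_le_of_forall_lt_exists_lt
    (s := {p | p.1 ≠ 0 ∧ cost x p = m * ν p.1}) ⟨p₀, hp₀1, hp₀⟩
    ⟨d + 1, Set.forall_mem_image.mpr fun p _ => hbdd p⟩
    fun p ⟨hp1, hp⟩ hr => by
      obtain ⟨p', hp'1, hp', hlt⟩ := exists_optimal_finrank_lt x ν hm hopt hf hp1 hp hr
      exact ⟨p', ⟨hp'1, hp'⟩, hlt⟩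
  exact ⟨p, hp1, hp, hd⟩

end Optimal

end MedianHyperplane

open MedianHyperplane in
/-- Weak incidence property: if the `n` data points affinely span a space of dimension
at least `d − 1`, there exists an optimal median hyperplane (minimizing the sum of
norm-based residuals `|βᵀxᵢ + α| / ν(β)`) passing through `d` affinely independent
data points. -/
theorem stmt16 {n d : ℕ} (hd : 1 ≤ d) (hn : d ≤ n)
    (x : Fin n → Fin d → ℝ)
    (ν : Seminorm ℝ (Fin d → ℝ)) (hν : ∀ β : Fin d → ℝ, β ≠ 0 → 0 < ν β)
    (hdim : d - 1 ≤ Module.finrank ℝ (affineSpan ℝ (Set.range x)).direction) :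
    ∃ (βs : Fin d → ℝ) (αs : ℝ), βs ≠ 0 ∧
      (∀ (β : Fin d → ℝ) (α : ℝ), β ≠ 0 →
        (∑ i : Fin n, |(∑ ℓ : Fin d, βs ℓ * x i ℓ) + αs| / ν βs) ≤
          ∑ i : Fin n, |(∑ ℓ : Fin d, β ℓ * x i ℓ) + α| / ν β) ∧
      ∃ idx : Fin d → Fin n,
        (∀ k : Fin d, (∑ ℓ : Fin d, βs ℓ * x (idx k) ℓ) + αs = 0) ∧
        AffineIndependent ℝ (fun k => x (idx k)) := by
  have : NeZero d := ⟨by omega⟩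
  have : Nonempty (Fin n) := ⟨⟨0, by omega⟩⟩
  obtain ⟨m, p₀, hm, hp₀1, hp₀, hopt⟩ := exists_optimal x ν hν
  obtain ⟨f, hf⟩ := exists_affineIndependent_comp_of_le_finrank x hdim
  obtain ⟨p, hp1, hp, hr⟩ := exists_optimal_le_finrank_incidentSpan x ν hm hopt hf hp₀1 hp₀
  obtain ⟨idx, hidx, hind⟩ := le_finrank_incidentSpan_iff.mp hr
  refine ⟨p.1, p.2, hp1, fun β α hβ => ?_, idx, hidx, hind⟩
  rw [← Finset.sum_div, ← Finset.sum_div, div_le_div_iff₀ (hν _ hp1) (hν _ hβ)]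
  change cost x p * ν β ≤ cost x (β, α) * ν p.1
  calc cost x p * ν β = m * ν β * ν p.1 := by rw [hp]; ring
    _ ≤ cost x (β, α) * ν p.1 := mul_le_mul_of_nonneg_right (hopt (β, α) hβ) (apply_nonneg ν _)
end
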